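/- arXiv:1810.04795 — 2 statements merged into one kernel-verified Lean document; each statement's English description precedes it below -/
import Mathlib

section
/- Let α : ℝⁿ → ℝ be locally log-Hölder continuous with log-Hölder constant c_log(α), let m ∈ ℕ and let R ≥ c_log(α). Then there exists a constant c > 0 such that t^(−α(x)) · η_{t,m+R}(x−y) ≤ c · t^(−α(y)) · η_{t,m}(x−y) for all 0 < t ≤ 1 and all x, y ∈ ℝⁿ, where η_{t,m}(z) := t^(−n)(1 + t^(−1)|z|)^(−m). -/
open Real MeasureTheory

/-- `η_{t,m}(z) := t^{-n} (1 + t⁻¹ |z|)^{-m}`. -/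
noncomputable def eta (n : ℕ) (t m : ℝ) (z : EuclideanSpace ℝ (Fin n)) : ℝ :=
  t ^ (-(n : ℝ)) * (1 + t⁻¹ * ‖z‖) ^ (-m)

/-- `g` is locally log-Hölder continuous with constant `c`. -/
def LocLogHolder (n : ℕ) (g : EuclideanSpace ℝ (Fin n) → ℝ) (c : ℝ) : Prop :=
  0 < c ∧ ∀ x y : EuclideanSpace ℝ (Fin n),
    |g x - g y| ≤ c / Real.log (Real.exp 1 + 1 / ‖x - y‖)

/-- Lemma 2.1: the log-Hölder exponent-shifting estimate. -/
theorem log_holder_eta_shift (n : ℕ) (α : EuclideanSpace ℝ (Fin n) → ℝ)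
    (clog : ℝ) (hα : LocLogHolder n α clog) (m : ℕ) (R : ℝ) (hR : clog ≤ R) :
    ∃ c > (0 : ℝ), ∀ t : ℝ, 0 < t → t ≤ 1 → ∀ x y : EuclideanSpace ℝ (Fin n),
      t ^ (-(α x)) * eta n t ((m : ℝ) + R) (x - y)
        ≤ c * (t ^ (-(α y)) * eta n t (m : ℝ) (x - y)) := by
  obtain ⟨hc, hlog⟩ := hα
  refine ⟨Real.exp clog, Real.exp_pos _, ?_⟩
  intro t ht ht1 x y
  have hexp1 : (1 : ℝ) ≤ Real.exp clog := by
    have := Real.add_one_le_exp clog; linarith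
  by_cases hxy : x = y
  · subst hxy
    simp only [sub_self, eta, norm_zero, mul_zero, add_zero, Real.one_rpow, mul_one]
    have h1 : (0:ℝ) < t ^ (-(α x)) * t ^ (-(n:ℝ)) := by positivity
    exact le_mul_of_one_le_left (le_of_lt h1) hexp1
  · set r : ℝ := ‖x - y‖ with hr
    have hr0 : 0 < r := by
      rw [hr]; simpa [sub_eq_zero] using hxy
    set B : ℝ := 1 + t⁻¹ * r with hB
    have hB1 : (1 : ℝ) ≤ B := by
      have : 0 < t⁻¹ * r := by positivity
      simp [hB]; linarith
    have hB0 : (0 : ℝ) < B := lt_of_lt_of_le one_pos hB1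
    set L : ℝ := Real.log (Real.exp 1 + 1 / r) with hL
    have hL1 : (1 : ℝ) ≤ L := by
      have h1 : Real.exp 1 ≤ Real.exp 1 + 1 / r := by
        have : 0 < 1 / r := by positivity
        linarith
      calc (1:ℝ) = Real.log (Real.exp 1) := (Real.log_exp 1).symm
        _ ≤ L := Real.log_le_log (Real.exp_pos 1) h1
    have hL0 : (0 : ℝ) < L := lt_of_lt_of_le one_pos hL1
    -- key logarithmic claim
    have hs1 : (1 : ℝ) ≤ t⁻¹ := by
      rw [le_inv_comm₀ one_pos ht]; simpa using ht1
    have hlogB : 0 ≤ Real.log B := Real.log_nonneg hB1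
    have hclaim : Real.log t⁻¹ ≤ L * (1 + Real.log B) := by
      have hstep : t⁻¹ ≤ B * (Real.exp 1 + 1 / r) := by
        have he : (1:ℝ) ≤ Real.exp 1 := by
          have := Real.add_one_le_exp (1:ℝ); linarith
        have h1r : 0 < 1 / r := by positivity
        have ht' : 0 < t⁻¹ := by positivity
        have : B * (Real.exp 1 + 1 / r) = Real.exp 1 + 1/r + t⁻¹ * r * Real.exp 1 + t⁻¹ * r * (1/r) := by
          rw [hB]; ring
        rw [this]
        have hrr : t⁻¹ * r * (1/r) = t⁻¹ := by
          field_simp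
        rw [hrr]
        nlinarith
      have h1 : Real.log t⁻¹ ≤ Real.log B + L := by
        calc Real.log t⁻¹ ≤ Real.log (B * (Real.exp 1 + 1 / r)) :=
              Real.log_le_log (by positivity) hstep
          _ = Real.log B + L := by
              rw [Real.log_mul (ne_of_gt hB0) (by positivity), hL]
      nlinarith
    -- the exponent inequality
    have hδ : |α y - α x| ≤ clog / L := by
      have := hlog y x
      have h : ‖y - x‖ = r := by rw [hr, norm_sub_rev]
      rwa [h] at this
    have hkey : t ^ (α y - α x) ≤ Real.exp clog * B ^ R := by
      have hlt : Real.log t⁻¹ = - Real.log t := Real.log_inv t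
      have hlogt : 0 ≤ Real.log t⁻¹ := by
        rw [Real.log_inv]
        have := Real.log_nonpos (le_of_lt ht) ht1
        linarith
      have h2 : (α y - α x) * Real.log t ≤ clog * (1 + Real.log B) := by
        have h3 : (α y - α x) * Real.log t ≤ |α y - α x| * Real.log t⁻¹ := by
          rw [hlt]
          have := abs_mul (α y - α x) (Real.log t)
          have h4 : (α y - α x) * Real.log t ≤ |(α y - α x) * Real.log t| := le_abs_self _
          rw [this, abs_of_nonpos (by linarith : Real.log t ≤ 0)] at h4
          linarith
        have h5 : |α y - α x| * Real.log t⁻¹ ≤ (clog / L) * (L * (1 + Real.log B)) := by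
          apply mul_le_mul hδ hclaim hlogt (by positivity)
        have h6 : (clog / L) * (L * (1 + Real.log B)) = clog * (1 + Real.log B) := by
          field_simp
        linarith
      calc t ^ (α y - α x) = Real.exp ((α y - α x) * Real.log t) := by
            rw [Real.rpow_def_of_pos ht]; ring_nf
        _ ≤ Real.exp (clog * (1 + Real.log B)) := Real.exp_le_exp.mpr h2
        _ = Real.exp clog * Real.exp (clog * Real.log B) := by
            rw [← Real.exp_add]; ring_nf
        _ = Real.exp clog * B ^ clog := by
            rw [Real.rpow_def_of_pos hB0]; ring_nf
        _ ≤ Real.exp clog * B ^ R := by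
            apply mul_le_mul_of_nonneg_left
              (Real.rpow_le_rpow_of_exponent_le hB1 hR) (le_of_lt (Real.exp_pos _))
    -- assemble
    have key : t ^ (-(α x)) * B ^ (-R) ≤ Real.exp clog * t ^ (-(α y)) := by
      have e1 : t ^ (-(α x)) = t ^ (-(α y)) * t ^ (α y - α x) := by
        rw [← Real.rpow_add ht]; ring_nf
      rw [e1]
      have hBR : (0:ℝ) < B ^ (-R) := Real.rpow_pos_of_pos hB0 _
      have hty : (0:ℝ) < t ^ (-(α y)) := Real.rpow_pos_of_pos ht _
      have hBRR : B ^ R * B ^ (-R) = 1 := by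
        rw [← Real.rpow_add hB0]; simp
      calc t ^ (-(α y)) * t ^ (α y - α x) * B ^ (-R)
          ≤ t ^ (-(α y)) * (Real.exp clog * B ^ R) * B ^ (-R) := by
            apply mul_le_mul_of_nonneg_right _ (le_of_lt hBR)
            exact mul_le_mul_of_nonneg_left hkey (le_of_lt hty)
        _ = Real.exp clog * t ^ (-(α y)) * (B ^ R * B ^ (-R)) := by ring
        _ = Real.exp clog * t ^ (-(α y)) := by rw [hBRR, mul_one]
    have esplit : B ^ (-((m:ℝ) + R)) = B ^ (-(m:ℝ)) * B ^ (-R) := by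
      rw [← Real.rpow_add hB0]; ring_nf
    simp only [eta, ← hr, ← hB]
    rw [esplit]
    have hpos : (0:ℝ) ≤ t ^ (-(n:ℝ)) * B ^ (-(m:ℝ)) := by positivity
    calc t ^ (-(α x)) * (t ^ (-(n:ℝ)) * (B ^ (-(m:ℝ)) * B ^ (-R)))
        = (t ^ (-(α x)) * B ^ (-R)) * (t ^ (-(n:ℝ)) * B ^ (-(m:ℝ))) := by ring
      _ ≤ (Real.exp clog * t ^ (-(α y))) * (t ^ (-(n:ℝ)) * B ^ (-(m:ℝ))) :=
          mul_le_mul_of_nonneg_right key hpos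
      _ = Real.exp clog * (t ^ (-(α y)) * (t ^ (-(n:ℝ)) * B ^ (-(m:ℝ)))) := by ring
end

section
/- Let ϱ, μ ∈ S(ℝⁿ) be Schwartz functions and let M ≥ −1 be an integer such that ∫_{ℝⁿ} x^α μ(x) dx = 0 for all multi-indices α with |α| ≤ M. Then for every N > 0 there is a constant c(N) > 0 such that for all 0 < t ≤ 1, sup_{z ∈ ℝⁿ} |(t^(−n) μ(t^(−1}·)) ∗ ϱ)(z)| · (1 + |z|)^N ≤ c(N) · t^{M+1}. -/
open Real MeasureTheory SchwartzMap Finset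
open scoped Nat

variable {E : Type*} [NormedAddCommGroup E] [NormedSpace ℝ E]

lemma iteratedDeriv_line (f : E → ℝ) (hf : ContDiff ℝ (⊤ : ℕ∞) f) (x v : E) (k : ℕ) :
    iteratedDeriv k (fun s : ℝ => f (x + s • v)) = fun s =>
      iteratedFDeriv ℝ k f (x + s • v) (fun _ => v) := by
  induction k with
  | zero => funext s; simp [iteratedDeriv_zero]
  | succ k ih =>
    rw [iteratedDeriv_succ, ih]
    funext s
    have h1 : HasDerivAt (fun s : ℝ => x + s • v) v s := by
      simpa using ((hasDerivAt_id s).smul_const v).const_add x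
    have h2 : HasFDerivAt (iteratedFDeriv ℝ k f)
        (fderiv ℝ (iteratedFDeriv ℝ k f) (x + s • v)) (x + s • v) :=
      (hf.differentiable_iteratedFDeriv (by exact_mod_cast ENat.coe_lt_top k) _).hasFDerivAt
    have h3 := h2.comp_hasDerivAt s h1
    have h4 := (ContinuousMultilinearMap.apply ℝ (fun _ : Fin k => E) ℝ
      (fun _ => v)).hasFDerivAt.comp_hasDerivAt s h3
    have h5 : HasDerivAt (fun s : ℝ => iteratedFDeriv ℝ k f (x + s • v) (fun _ => v))
        (fderiv ℝ (iteratedFDeriv ℝ k f) (x + s • v) v (fun _ => v)) s := h4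
    rw [h5.deriv, iteratedFDeriv_succ_apply_left]
    rfl

lemma iteratedDerivWithin_eq_of_contDiff {g : ℝ → ℝ} (hg : ContDiff ℝ (⊤ : ℕ∞) g) {s : Set ℝ}
    (hs : UniqueDiffOn ℝ s) {y : ℝ} (hy : y ∈ s) (k : ℕ) :
    iteratedDerivWithin k g s y = iteratedDeriv k g y := by
  rw [iteratedDerivWithin, iteratedDeriv]
  congr 1
  have h := ((hg.contDiffOn (s := Set.univ)).ftaylorSeriesWithin
    uniqueDiffOn_univ).mono (Set.subset_univ s)
  have h2 := h.eq_iteratedFDerivWithin_of_uniqueDiffOn (m := k) (by exact_mod_cast le_top) hs hy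
  rw [← h2]
  simp [ftaylorSeriesWithin, iteratedFDerivWithin_univ]

lemma taylor_line_bound {f : E → ℝ} (hf : ContDiff ℝ (⊤ : ℕ∞) f) (m : ℕ) (x v : E) {C : ℝ}
    (hC : ∀ s ∈ Set.Icc (0:ℝ) 1, ‖iteratedFDeriv ℝ m f (x + s • v)‖ ≤ C) :
    |f (x + v) - ∑ k ∈ range m, (k ! : ℝ)⁻¹ * iteratedFDeriv ℝ k f x (fun _ => v)|
      ≤ C * ‖v‖ ^ m := by
  have hC0 : 0 ≤ C := le_trans (norm_nonneg _) (hC 0 ⟨le_rfl, zero_le_one⟩)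
  set g : ℝ → ℝ := fun s => f (x + s • v) with hg_def
  have hg : ContDiff ℝ (⊤ : ℕ∞) g := by
    apply hf.comp
    exact contDiff_const.add (contDiff_id.smul contDiff_const)
  have hgd : ∀ (k : ℕ) (s : ℝ), iteratedDeriv k g s
      = iteratedFDeriv ℝ k f (x + s • v) (fun _ => v) := by
    intro k s
    rw [iteratedDeriv_line f hf x v k]
  match m with
  | 0 =>
    simp only [range_zero, sum_empty, sub_zero, pow_zero, mul_one]
    have := hC 1 ⟨zero_le_one, le_rfl⟩
    rw [norm_iteratedFDeriv_zero] at this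
    simpa using this
  | (m' + 1) =>
    have key := taylor_mean_remainder_bound (f := g) (a := 0) (b := 1) (x := 1)
      (n := m') (C := C * ‖v‖ ^ (m' + 1)) zero_le_one
      ((hg.of_le (by exact_mod_cast le_top)).contDiffOn)
      ⟨zero_le_one, le_rfl⟩ ?_
    · have heq : g 1 - taylorWithinEval g m' (Set.Icc 0 1) 0 1 =
          f (x + v) - ∑ k ∈ range (m' + 1),
            (k ! : ℝ)⁻¹ * iteratedFDeriv ℝ k f x (fun _ => v) := by
        congr 1
        · simp [hg_def]
        · rw [taylor_within_apply]
          refine Finset.sum_congr rfl (fun k _ => ?_)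
          rw [iteratedDerivWithin_eq_of_contDiff hg (uniqueDiffOn_Icc zero_lt_one)
            (Set.mem_Icc.2 ⟨le_rfl, zero_le_one⟩) k, hgd]
          simp
      rw [heq] at key
      refine key.trans ?_
      have : C * ‖v‖ ^ (m' + 1) * (1 - 0) ^ (m' + 1) / m' ! ≤ C * ‖v‖ ^ (m' + 1) := by
        rw [sub_zero, one_pow, mul_one]
        apply div_le_self (by positivity)
        exact_mod_cast Nat.one_le_iff_ne_zero.2 (Nat.factorial_ne_zero m')
      exact this
    · intro y hy
      rw [iteratedDerivWithin_eq_of_contDiff hg (uniqueDiffOn_Icc zero_lt_one) hy, hgd]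
      calc ‖iteratedFDeriv ℝ (m' + 1) f (x + y • v) (fun _ => v)‖
          ≤ ‖iteratedFDeriv ℝ (m' + 1) f (x + y • v)‖ * ∏ _i : Fin (m' + 1), ‖v‖ :=
            ContinuousMultilinearMap.le_opNorm _ _
        _ ≤ C * ‖v‖ ^ (m' + 1) := by
            rw [Finset.prod_const, Finset.card_univ, Fintype.card_fin]
            exact mul_le_mul_of_nonneg_right (hC y hy) (by positivity)

lemma abs_coord_le {n : ℕ} (u : EuclideanSpace ℝ (Fin n)) (i : Fin n) : |u i| ≤ ‖u‖ := by
  rw [EuclideanSpace.norm_eq]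
  rw [← Real.sqrt_sq_eq_abs]
  apply Real.sqrt_le_sqrt
  have : |u i| ^ 2 ≤ ∑ j, ‖u j‖ ^ 2 := by
    refine Finset.single_le_sum (f := fun j => ‖u j‖ ^ 2) (fun j _ => by positivity)
      (Finset.mem_univ i) |>.trans_eq' ?_
    simp [Real.norm_eq_abs, sq_abs]
  simpa [sq_abs] using this

lemma prod_coord_le {n k : ℕ} (u : EuclideanSpace ℝ (Fin n)) (r : Fin k → Fin n) :
    |∏ i, u (r i)| ≤ ‖u‖ ^ k := by
  rw [Finset.abs_prod]
  calc ∏ i, |u (r i)| ≤ ∏ _i : Fin k, ‖u‖ :=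
        Finset.prod_le_prod (fun i _ => abs_nonneg _) (fun i _ => abs_coord_le u (r i))
    _ = ‖u‖ ^ k := by simp

lemma continuous_coord {n : ℕ} (j : Fin n) :
    Continuous (fun u : EuclideanSpace ℝ (Fin n) => u j) :=
  (PiLp.proj 2 (fun _ : Fin n => ℝ) j (𝕜 := ℝ)).continuous

lemma integrable_monomial_mul {n k : ℕ} (μ : 𝓢(EuclideanSpace ℝ (Fin n), ℝ))
    (r : Fin k → Fin n) :
    Integrable (fun u : EuclideanSpace ℝ (Fin n) => (∏ i, u (r i)) * μ u) := by
  refine (μ.integrable_pow_mul volume k).mono ?_ ?_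
  · exact (Continuous.mul (continuous_finset_prod _ (fun i _ => continuous_coord (r i)))
      μ.continuous).aestronglyMeasurable
  · refine Filter.Eventually.of_forall (fun u => ?_)
    calc ‖(∏ i, u (r i)) * μ u‖ = |∏ i, u (r i)| * ‖μ u‖ := by rw [norm_mul]; rfl
      _ ≤ ‖u‖ ^ k * ‖μ u‖ := mul_le_mul_of_nonneg_right (prod_coord_le u r) (norm_nonneg _)
      _ ≤ ‖‖u‖ ^ k * ‖μ u‖‖ := le_abs_self _

lemma moment_zero {n : ℕ} (μ : 𝓢(EuclideanSpace ℝ (Fin n), ℝ)) (M : ℤ)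
    (hmom : ∀ β : Fin n → ℕ, ((∑ i, β i : ℕ) : ℤ) ≤ M →
      ∫ x : EuclideanSpace ℝ (Fin n), (∏ i, (x i) ^ (β i)) * μ x = 0)
    (k : ℕ) (hk : (k : ℤ) ≤ M)
    (T : ContinuousMultilinearMap ℝ (fun _ : Fin k => EuclideanSpace ℝ (Fin n)) ℝ) :
    ∫ u : EuclideanSpace ℝ (Fin n), μ u * T (fun _ => u) = 0 := by
  have hexp : ∀ u : EuclideanSpace ℝ (Fin n), T (fun _ => u) =
      ∑ r : Fin k → Fin n, (∏ i, u (r i)) *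
        T (fun i => EuclideanSpace.basisFun (Fin n) ℝ (r i)) := by
    intro u
    have hu : (fun _ : Fin k => u) =
        fun _ : Fin k => ∑ j : Fin n, u j • (EuclideanSpace.basisFun (Fin n) ℝ j : _) := by
      funext _
      exact ((EuclideanSpace.basisFun (Fin n) ℝ).sum_repr u).symm ▸ by
        simp [EuclideanSpace.basisFun_repr]
    rw [hu]
    rw [T.map_sum]
    refine Fintype.sum_congr _ _ (fun r => ?_)
    have := T.map_smul_univ (fun i => u (r i))
      (fun i => (EuclideanSpace.basisFun (Fin n) ℝ (r i) : EuclideanSpace ℝ (Fin n)))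
    simpa [smul_eq_mul] using this
  calc ∫ u : EuclideanSpace ℝ (Fin n), μ u * T (fun _ => u)
      = ∫ u : EuclideanSpace ℝ (Fin n), ∑ r : Fin k → Fin n,
          T (fun i => EuclideanSpace.basisFun (Fin n) ℝ (r i)) * ((∏ i, u (r i)) * μ u) := by
        congr 1; funext u; rw [hexp u, Finset.mul_sum]; congr 1; funext r; ring
    _ = ∑ r : Fin k → Fin n, T (fun i => EuclideanSpace.basisFun (Fin n) ℝ (r i)) *
          ∫ u : EuclideanSpace ℝ (Fin n), (∏ i, u (r i)) * μ u := by
        rw [integral_finset_sum]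
        · exact Finset.sum_congr rfl (fun r _ => integral_const_mul _ _)
        · exact fun r _ => (integrable_monomial_mul μ r).const_mul _
    _ = 0 := by
        refine Finset.sum_eq_zero (fun r _ => ?_)
        have hβ : ∀ u : EuclideanSpace ℝ (Fin n), ∏ i, u (r i) =
            ∏ j, (u j) ^ (Finset.univ.filter (fun i => r i = j)).card := by
          intro u
          rw [← Finset.prod_fiberwise_of_maps_to (g := r) (fun i _ => Finset.mem_univ (r i))
            (fun i => u (r i))]
          refine Finset.prod_congr rfl (fun j _ => ?_)
          rw [Finset.prod_congr rfl (fun i hi => ?_), Finset.prod_const]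
          rw [(Finset.mem_filter.1 hi).2]
        have hsum : ∑ j, (Finset.univ.filter (fun i => r i = j)).card = k := by
          rw [← Finset.card_eq_sum_card_fiberwise (fun i _ => Finset.mem_univ (r i))]
          simp
        have := hmom (fun j => (Finset.univ.filter (fun i => r i = j)).card)
          (by rw [hsum]; exact hk)
        simp only [← hβ] at this
        rw [this, mul_zero]

lemma one_add_pow_le (a : ℝ) (ha : 0 ≤ a) (K : ℕ) :
    (1 + a) ^ K ≤ 2 ^ K * (1 + a ^ K) := by
  rcases le_total a 1 with h | h
  · calc (1 + a) ^ K ≤ 2 ^ K := by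
          apply pow_le_pow_left₀ (by positivity); linarith
      _ ≤ 2 ^ K * (1 + a ^ K) := by nlinarith [pow_nonneg ha K, pow_pos (zero_lt_two (α := ℝ)) K]
  · calc (1 + a) ^ K ≤ (2 * a) ^ K := by
          apply pow_le_pow_left₀ (by positivity); linarith
      _ = 2 ^ K * a ^ K := mul_pow 2 a K
      _ ≤ 2 ^ K * (1 + a ^ K) := by nlinarith [pow_pos (zero_lt_two (α := ℝ)) K]

lemma schwartz_decay_weight {E : Type*} [NormedAddCommGroup E] [NormedSpace ℝ E] (f : 𝓢(E, ℝ)) (K m : ℕ) :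
    ∃ B : ℝ, 0 < B ∧ ∀ w, ‖iteratedFDeriv ℝ m f w‖ * (1 + ‖w‖) ^ K ≤ B := by
  obtain ⟨C0, hC0, h0⟩ := f.decay 0 m
  obtain ⟨CK, hCK, hK⟩ := f.decay K m
  refine ⟨2 ^ K * (C0 + CK), by positivity, fun w => ?_⟩
  calc ‖iteratedFDeriv ℝ m f w‖ * (1 + ‖w‖) ^ K
      ≤ ‖iteratedFDeriv ℝ m f w‖ * (2 ^ K * (1 + ‖w‖ ^ K)) :=
        mul_le_mul_of_nonneg_left (one_add_pow_le _ (norm_nonneg _) K) (norm_nonneg _)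
    _ = 2 ^ K * (1 * ‖iteratedFDeriv ℝ m f w‖ + ‖w‖ ^ K * ‖iteratedFDeriv ℝ m f w‖) := by ring
    _ ≤ 2 ^ K * (C0 + CK) := by
        have := h0 w; have := hK w
        have h2 : (0:ℝ) < 2 ^ K := by positivity
        apply mul_le_mul_of_nonneg_left _ (le_of_lt h2)
        apply add_le_add
        · simpa using h0 w
        · exact hK w

lemma conv_change_var (n : ℕ) (ϱ μ : 𝓢(EuclideanSpace ℝ (Fin n), ℝ)) {t : ℝ} (ht : 0 < t)
    (z : EuclideanSpace ℝ (Fin n)) :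
    ∫ y : EuclideanSpace ℝ (Fin n), ((t ^ n)⁻¹ : ℝ) * μ (t⁻¹ • (z - y)) * ϱ y
      = ∫ u : EuclideanSpace ℝ (Fin n), μ u * ϱ (z - t • u) := by
  set F : EuclideanSpace ℝ (Fin n) → ℝ := fun y => μ (t⁻¹ • y) * ϱ (z - y) with hF
  have h1 : ∀ y : EuclideanSpace ℝ (Fin n),
      ((t ^ n)⁻¹ : ℝ) * μ (t⁻¹ • (z - y)) * ϱ y = (t ^ n)⁻¹ * F (z - y) := by
    intro y
    simp only [hF, sub_sub_cancel]
    ring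
  rw [show (fun y : EuclideanSpace ℝ (Fin n) => ((t ^ n)⁻¹ : ℝ) * μ (t⁻¹ • (z - y)) * ϱ y)
      = fun y => (t ^ n)⁻¹ * F (z - y) from funext h1]
  rw [integral_const_mul, integral_sub_left_eq_self F volume z]
  have h2 := MeasureTheory.Measure.integral_comp_smul (volume (α := EuclideanSpace ℝ (Fin n))) F t
  rw [finrank_euclideanSpace_fin] at h2
  have h3 : ∀ x : EuclideanSpace ℝ (Fin n), F (t • x) = μ x * ϱ (z - t • x) := by
    intro x
    simp only [hF, smul_smul, inv_mul_cancel₀ ht.ne', one_smul]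
  rw [show (fun x : EuclideanSpace ℝ (Fin n) => F (t • x))
      = fun x => μ x * ϱ (z - t • x) from funext h3] at h2
  rw [h2, abs_of_nonneg (by positivity), smul_eq_mul]

section main
variable {n : ℕ}

lemma integrable_mul_ml {k : ℕ} (μ : 𝓢(EuclideanSpace ℝ (Fin n), ℝ))
    (T : ContinuousMultilinearMap ℝ (fun _ : Fin k => EuclideanSpace ℝ (Fin n)) ℝ) :
    Integrable (fun u : EuclideanSpace ℝ (Fin n) => μ u * T (fun _ => u)) := by
  refine ((μ.integrable_pow_mul volume k).const_mul ‖T‖).mono ?_ ?_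
  · exact (μ.continuous.mul (T.cont.comp (continuous_pi (fun _ => continuous_id)))).aestronglyMeasurable
  · refine Filter.Eventually.of_forall (fun u => ?_)
    calc ‖μ u * T (fun _ => u)‖ = ‖μ u‖ * ‖T (fun _ => u)‖ := norm_mul _ _
      _ ≤ ‖μ u‖ * (‖T‖ * ∏ _i : Fin k, ‖u‖) :=
          mul_le_mul_of_nonneg_left (T.le_opNorm _) (norm_nonneg _)
      _ = ‖T‖ * (‖u‖ ^ k * ‖μ u‖) := by simp [Finset.prod_const]; ring
      _ ≤ ‖‖T‖ * (‖u‖ ^ k * ‖μ u‖)‖ := le_abs_self _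

/-- Rychkov's lemma on dilated convolutions with vanishing moments:
if `∫ x^β μ(x) dx = 0` for `|β| ≤ M`, then for each `N > 0` one has
`sup_z |(t^{-n} μ(t⁻¹ ·)) ∗ ϱ(z)| (1+|z|)^N ≤ c(N) t^{M+1}` for `0 < t ≤ 1`. -/
theorem rychkov_moment_lemma (n : ℕ) (ϱ μ : 𝓢(EuclideanSpace ℝ (Fin n), ℝ))
    (M : ℤ) (hM : -1 ≤ M)
    (hmom : ∀ β : Fin n → ℕ, ((∑ i, β i : ℕ) : ℤ) ≤ M →
      ∫ x : EuclideanSpace ℝ (Fin n), (∏ i, (x i) ^ (β i)) * μ x = 0) :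
    ∀ N : ℝ, 0 < N → ∃ c > (0 : ℝ), ∀ t : ℝ, 0 < t → t ≤ 1 →
      ∀ z : EuclideanSpace ℝ (Fin n),
        |∫ y : EuclideanSpace ℝ (Fin n), ((t ^ n)⁻¹ : ℝ) * μ (t⁻¹ • (z - y)) * ϱ y| *
            (1 + ‖z‖) ^ N
          ≤ c * t ^ ((M : ℝ) + 1) := by
  intro N hN
  set E := EuclideanSpace ℝ (Fin n) with hE
  set m : ℕ := (M + 1).toNat with hm_def
  have hm : (m : ℤ) = M + 1 := Int.toNat_of_nonneg (by omega)
  set K : ℕ := ⌈N⌉₊ with hK_def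
  have hNK : N ≤ (K : ℝ) := Nat.le_ceil N
  obtain ⟨B, hB, hBdecay⟩ := schwartz_decay_weight ϱ K m
  set g : E → ℝ := fun u => 2 ^ K * (‖u‖ ^ m * ‖μ u‖ + ‖u‖ ^ (m + K) * ‖μ u‖) with hg_def
  have hg_int : Integrable g :=
    ((μ.integrable_pow_mul volume m).add (μ.integrable_pow_mul volume (m + K))).const_mul _
  have hg_nonneg : ∀ u, 0 ≤ g u := fun u => by positivity
  have hgI : 0 ≤ ∫ u, g u := integral_nonneg hg_nonneg
  refine ⟨B * (∫ u, g u) + 1, by nlinarith [hgI], fun t ht ht1 z => ?_⟩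
  have htm : t ^ ((M : ℝ) + 1) = t ^ m := by
    rw [show (M : ℝ) + 1 = (m : ℝ) by exact_mod_cast congrArg (Int.cast : ℤ → ℝ) hm.symm]
    exact Real.rpow_natCast t m
  rw [htm, conv_change_var n ϱ μ ht z]
  -- Taylor polynomial
  set P : E → ℝ := fun u => ∑ k ∈ range m,
    (k ! : ℝ)⁻¹ * iteratedFDeriv ℝ k (ϱ : E → ℝ) z (fun _ => -(t • u)) with hP_def
  have hPfun : (fun u : E => μ u * P u) = fun u : E => ∑ k ∈ range m,
      ((k ! : ℝ)⁻¹ * (-t) ^ k) * (μ u * iteratedFDeriv ℝ k (ϱ : E → ℝ) z (fun _ => u)) := by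
    funext u
    rw [hP_def, Finset.mul_sum]
    refine Finset.sum_congr rfl (fun k _ => ?_)
    have h1 : (fun _ : Fin k => -(t • u)) = fun _ : Fin k => (-t) • u := by
      funext _; rw [neg_smul]
    rw [h1, (iteratedFDeriv ℝ k (ϱ : E → ℝ) z).map_smul_univ (fun _ => -t) (fun _ => u)]
    simp only [Finset.prod_const, Finset.card_univ, Fintype.card_fin, smul_eq_mul]
    ring
  have hint_g : Integrable (fun u : E => μ u * ϱ (z - t • u)) := by
    obtain ⟨Cϱ, hCϱ, hCϱ'⟩ := ϱ.decay 0 0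
    refine ((μ.integrable (μ := volume)).norm.const_mul Cϱ).mono ?_ ?_
    · exact (μ.continuous.mul (ϱ.continuous.comp (by fun_prop))).aestronglyMeasurable
    · refine Filter.Eventually.of_forall (fun u => ?_)
      calc ‖μ u * ϱ (z - t • u)‖ = ‖ϱ (z - t • u)‖ * ‖μ u‖ := by rw [norm_mul]; ring
        _ ≤ Cϱ * ‖μ u‖ := by
            refine mul_le_mul_of_nonneg_right ?_ (norm_nonneg _)
            simpa using hCϱ' (z - t • u)
        _ ≤ ‖Cϱ * ‖μ u‖‖ := le_abs_self _
  have hint_P : Integrable (fun u : E => μ u * P u) := by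
    rw [hPfun]
    exact integrable_finset_sum _ (fun k _ => (integrable_mul_ml μ _).const_mul _)
  have hP_zero : ∫ u : E, μ u * P u = 0 := by
    rw [hPfun, integral_finset_sum _ (fun k hk => (integrable_mul_ml μ _).const_mul _)]
    refine Finset.sum_eq_zero (fun k hk => ?_)
    rw [integral_const_mul,
      moment_zero μ M hmom k (by have := Finset.mem_range.1 hk; omega) _, mul_zero]
  have hsub : ∫ u : E, μ u * ϱ (z - t • u) = ∫ u : E, μ u * (ϱ (z - t • u) - P u) := by
    rw [show (fun u : E => μ u * (ϱ (z - t • u) - P u))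
        = fun u : E => μ u * ϱ (z - t • u) - μ u * P u from funext fun u => by ring]
    rw [integral_sub hint_g hint_P, hP_zero, sub_zero]
  rw [hsub]
  have hz1 : (0:ℝ) < 1 + ‖z‖ := by positivity
  have hzN : (0:ℝ) < (1 + ‖z‖) ^ N := Real.rpow_pos_of_pos hz1 N
  -- pointwise bound
  have hpt : ∀ u : E, ‖μ u * (ϱ (z - t • u) - P u)‖ * (1 + ‖z‖) ^ N ≤ B * t ^ m * g u := by
    intro u
    have hC : ∀ s ∈ Set.Icc (0:ℝ) 1,
        ‖iteratedFDeriv ℝ m (ϱ : E → ℝ) (z + s • -(t • u))‖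
          ≤ B * (1 + ‖u‖) ^ K / (1 + ‖z‖) ^ N := by
      intro s hs
      set w := z + s • -(t • u) with hw
      have hw1 : (0:ℝ) < 1 + ‖w‖ := by positivity
      have hzw : 1 + ‖z‖ ≤ (1 + ‖w‖) * (1 + ‖u‖) := by
        have h1 : ‖z‖ ≤ ‖w‖ + ‖u‖ := by
          have hz2 : z = w - s • -(t • u) := by rw [hw]; abel
          rw [hz2]
          refine (norm_sub_le _ _).trans ?_
          have h3 : ‖s • -(t • u)‖ ≤ ‖u‖ := by
            rw [norm_smul, norm_neg, norm_smul]
            simp only [Real.norm_eq_abs]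
            have ht' : |t| ≤ 1 := by rw [abs_of_pos ht]; exact ht1
            have hs' : |s| ≤ 1 := by rw [abs_of_nonneg hs.1]; exact hs.2
            calc |s| * (|t| * ‖u‖) ≤ 1 * (1 * ‖u‖) := by
                  gcongr
              _ = ‖u‖ := by ring
          linarith
        nlinarith [norm_nonneg w, norm_nonneg u, norm_nonneg z]
      have hzN_le : (1 + ‖z‖) ^ N ≤ ((1 + ‖w‖) * (1 + ‖u‖)) ^ K :=
        calc (1 + ‖z‖) ^ N ≤ (1 + ‖z‖) ^ (K : ℝ) :=
              Real.rpow_le_rpow_of_exponent_le (by linarith [norm_nonneg z]) hNK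
          _ = (1 + ‖z‖) ^ K := Real.rpow_natCast _ K
          _ ≤ ((1 + ‖w‖) * (1 + ‖u‖)) ^ K := by
              apply pow_le_pow_left₀ (by positivity) hzw
      rw [le_div_iff₀ hzN]
      calc ‖iteratedFDeriv ℝ m (ϱ : E → ℝ) w‖ * (1 + ‖z‖) ^ N
          ≤ ‖iteratedFDeriv ℝ m (ϱ : E → ℝ) w‖ * ((1 + ‖w‖) * (1 + ‖u‖)) ^ K :=
            mul_le_mul_of_nonneg_left hzN_le (norm_nonneg _)
        _ = (‖iteratedFDeriv ℝ m (ϱ : E → ℝ) w‖ * (1 + ‖w‖) ^ K) * (1 + ‖u‖) ^ K := by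
            rw [mul_pow]; ring
        _ ≤ B * (1 + ‖u‖) ^ K :=
            mul_le_mul_of_nonneg_right (hBdecay w) (by positivity)
    have hT := taylor_line_bound (ϱ.smooth ⊤) m z (-(t • u)) hC
    rw [show z + -(t • u) = z - t • u from (sub_eq_add_neg z (t • u)).symm] at hT
    have hvnorm : ‖-(t • u)‖ = t * ‖u‖ := by
      rw [norm_neg, norm_smul, Real.norm_eq_abs, abs_of_pos ht]
    rw [hvnorm] at hT
    have hRP : |ϱ (z - t • u) - P u| ≤ B * (1 + ‖u‖) ^ K / (1 + ‖z‖) ^ N * (t * ‖u‖) ^ m := by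
      simp only [hP_def]; exact hT
    calc ‖μ u * (ϱ (z - t • u) - P u)‖ * (1 + ‖z‖) ^ N
        = ‖μ u‖ * |ϱ (z - t • u) - P u| * (1 + ‖z‖) ^ N := by rw [norm_mul]; rfl
      _ ≤ ‖μ u‖ * (B * (1 + ‖u‖) ^ K / (1 + ‖z‖) ^ N * (t * ‖u‖) ^ m) * (1 + ‖z‖) ^ N := by
          refine mul_le_mul_of_nonneg_right (mul_le_mul_of_nonneg_left hRP (norm_nonneg _))
            hzN.le
      _ = ‖μ u‖ * (B * (1 + ‖u‖) ^ K * (t * ‖u‖) ^ m) := by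
          field_simp
      _ = B * t ^ m * (‖u‖ ^ m * (1 + ‖u‖) ^ K * ‖μ u‖) := by
          rw [mul_pow]; ring
      _ ≤ B * t ^ m * g u := by
          refine mul_le_mul_of_nonneg_left ?_ (by positivity)
          calc ‖u‖ ^ m * (1 + ‖u‖) ^ K * ‖μ u‖
              ≤ ‖u‖ ^ m * (2 ^ K * (1 + ‖u‖ ^ K)) * ‖μ u‖ := by
                refine mul_le_mul_of_nonneg_right (mul_le_mul_of_nonneg_left
                  (one_add_pow_le ‖u‖ (norm_nonneg u) K) (by positivity)) (norm_nonneg _)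
            _ = g u := by simp only [hg_def]; rw [pow_add]; ring
  -- final assembly
  calc |∫ u : E, μ u * (ϱ (z - t • u) - P u)| * (1 + ‖z‖) ^ N
      = ‖∫ u : E, μ u * (ϱ (z - t • u) - P u)‖ * (1 + ‖z‖) ^ N := by
        rw [Real.norm_eq_abs]
    _ ≤ (∫ u : E, ‖μ u * (ϱ (z - t • u) - P u)‖) * (1 + ‖z‖) ^ N :=
        mul_le_mul_of_nonneg_right (norm_integral_le_integral_norm _) hzN.le
    _ = ∫ u : E, ‖μ u * (ϱ (z - t • u) - P u)‖ * (1 + ‖z‖) ^ N :=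
        (integral_mul_const _ _).symm
    _ ≤ ∫ u : E, B * t ^ m * g u := by
        refine integral_mono_of_nonneg (Filter.Eventually.of_forall (fun u => by positivity))
          (hg_int.const_mul _) (Filter.Eventually.of_forall hpt)
    _ = B * t ^ m * ∫ u, g u := integral_const_mul _ _
    _ = (B * (∫ u, g u)) * t ^ m := by ring
    _ ≤ (B * (∫ u, g u) + 1) * t ^ m := by
        have htm0 : (0:ℝ) ≤ t ^ m := by positivity
        nlinarith
end main
end
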